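/- arXiv:2109.11839 — 4 statements merged into one kernel-verified Lean document; each statement's English description precedes it below -/
import Mathlib

section
/- (Lemma 1) For every x ∈ ℂ^n, P̄ · P · x = x_l, i.e., applying F-pooling followed by inverse F-pooling yields exactly the low-frequency component of x. -/
open Matrix Complex Finset

/-- The (unnormalized) DFT matrix: entries exp(-2πi·jk/n). -/
noncomputable def dftMatrix (n : ℕ) : Matrix (Fin n) (Fin n) ℂ :=
  Matrix.of fun j k =>
    Complex.exp (-2 * (Real.pi : ℂ) * Complex.I * ((j.val : ℂ) * (k.val : ℂ)) / (n : ℂ))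

/-- Selection matrix keeping the first μ and last (m−μ) coordinate rows. -/
def selD (n m μ : ℕ) : Matrix (Fin m) (Fin n) ℂ :=
  Matrix.of fun j k =>
    if (j.val < μ ∧ k.val = j.val) ∨ (μ ≤ j.val ∧ k.val = j.val + n - m) then 1 else 0

/-- Diagonal projection keeping the first μ and last μ coordinates. -/
def selL (n μ : ℕ) : Matrix (Fin n) (Fin n) ℂ :=
  Matrix.diagonal fun k => if k.val < μ ∨ n - μ ≤ k.val then 1 else 0

/-- F-pooling matrix P = (1/n) F_m* D_μ F_n. -/
noncomputable def fpool (n m μ : ℕ) : Matrix (Fin m) (Fin n) ℂ :=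
  (1 / (n : ℂ)) • ((dftMatrix m)ᴴ * selD n m μ * dftMatrix n)

/-- Inverse F-pooling matrix P̄ = (1/m) F_n* U_μ F_m with U_μ = D_μᵀ. -/
noncomputable def fpoolInv (n m μ : ℕ) : Matrix (Fin n) (Fin m) ℂ :=
  (1 / (m : ℂ)) • ((dftMatrix n)ᴴ * (selD n m μ)ᵀ * dftMatrix m)

/-- Low-frequency component x_l = (1/n) F_n* L_μ F_n x. -/
noncomputable def lowFreq (n μ : ℕ) (x : Fin n → ℂ) : Fin n → ℂ :=
  (1 / (n : ℂ)) • ((dftMatrix n)ᴴ *ᵥ (selL n μ *ᵥ (dftMatrix n *ᵥ x)))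

/-- Circular shift by t pixels: (S_t x)_k = x_{(k−t) mod n}. -/
def shift {n : ℕ} (t : ℤ) (x : Fin n → ℂ) : Fin n → ℂ :=
  fun k => x ⟨(((k.val : ℤ) - t) % (n : ℤ)).toNat, by
    have hn : (0 : ℤ) < (n : ℤ) := by exact_mod_cast k.pos
    have h2 : ((k.val : ℤ) - t) % (n : ℤ) < (n : ℤ) := Int.emod_lt_of_pos _ hn
    have h1 : 0 ≤ ((k.val : ℤ) - t) % (n : ℤ) := Int.emod_nonneg _ (by omega)
    omega⟩


lemma dft_mul_conjT (m : ℕ) (hm : 0 < m) :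
    dftMatrix m * (dftMatrix m)ᴴ = (m : ℂ) • (1 : Matrix (Fin m) (Fin m) ℂ) := by
  ext j k
  have hm0 : (m : ℂ) ≠ 0 := Nat.cast_ne_zero.mpr hm.ne'
  simp only [Matrix.mul_apply, Matrix.conjTranspose_apply, dftMatrix, Matrix.of_apply,
    Matrix.smul_apply, Matrix.one_apply]
  set θ : ℂ := -2 * (Real.pi : ℂ) * Complex.I * ((j.val : ℂ) - (k.val : ℂ)) / (m : ℂ) with hθ
  have hterm : ∀ l : Fin m,
      Complex.exp (-2 * (Real.pi : ℂ) * Complex.I * ((j.val : ℂ) * (l.val : ℂ)) / (m : ℂ)) *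
        (starRingEnd ℂ) (Complex.exp (-2 * (Real.pi : ℂ) * Complex.I * ((k.val : ℂ) * (l.val : ℂ)) / (m : ℂ)))
      = Complex.exp θ ^ (l.val) := by
    intro l
    rw [← Complex.exp_conj, ← Complex.exp_add, ← Complex.exp_nat_mul]
    congr 1
    have : (starRingEnd ℂ) (-2 * (Real.pi : ℂ) * Complex.I * ((k.val : ℂ) * (l.val : ℂ)) / (m : ℂ))
        = 2 * (Real.pi : ℂ) * Complex.I * ((k.val : ℂ) * (l.val : ℂ)) / (m : ℂ) := by
      simp only [map_div₀, _root_.map_mul, map_neg, map_ofNat, Complex.conj_I,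
        Complex.conj_natCast, Complex.conj_ofReal]
      ring
    rw [this, hθ]
    field_simp
    ring
  simp only [Complex.star_def]
  rw [Finset.sum_congr rfl (fun l _ => hterm l)]
  by_cases hjk : j = k
  · subst hjk
    have : θ = 0 := by rw [hθ]; ring
    simp [this]
  · have hne : ((j.val : ℂ) - (k.val : ℂ)) ≠ 0 := by
      intro h
      apply hjk
      have : (j.val : ℂ) = (k.val : ℂ) := by linear_combination h
      exact Fin.ext (by exact_mod_cast this)
    have hr1 : Complex.exp θ ≠ 1 := by
      rw [Ne, Complex.exp_eq_one_iff]
      rintro ⟨t, ht⟩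
      rw [hθ] at ht
      have hI : (Complex.I : ℂ) ≠ 0 := Complex.I_ne_zero
      have hπ : (Real.pi : ℂ) ≠ 0 := by exact_mod_cast Real.pi_ne_zero
      have h2πI : (2 * (Real.pi : ℂ) * Complex.I) ≠ 0 := by
        simp [hπ, hI]
      have hc : (j.val : ℂ) - (k.val : ℂ) = -(t : ℂ) * (m : ℂ) := by
        field_simp at ht
        apply mul_left_cancel₀ h2πI
        linear_combination -(2 * (Real.pi : ℂ) * Complex.I) * ht
      have hz : ((j.val : ℤ) - (k.val : ℤ) : ℤ) = -t * m := by
        exact_mod_cast hc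
      have hjz : (j.val : ℤ) < (m : ℤ) := by exact_mod_cast j.isLt
      have hkz : (k.val : ℤ) < (m : ℤ) := by exact_mod_cast k.isLt
      have hjz0 : (0 : ℤ) ≤ (j.val : ℤ) := Int.natCast_nonneg _
      have hkz0 : (0 : ℤ) ≤ (k.val : ℤ) := Int.natCast_nonneg _
      have hmz : (0 : ℤ) < (m : ℤ) := by exact_mod_cast hm
      have hjkz : (j.val : ℤ) ≠ (k.val : ℤ) := by
        intro h; exact hjk (Fin.ext (by exact_mod_cast h))
      rcases lt_trichotomy t 0 with h | h | h
      · have ht1 : (1 : ℤ) ≤ -t := by omega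
        nlinarith
      · subst h
        simp at hz
        omega
      · have ht1 : (1 : ℤ) ≤ t := by omega
        nlinarith
    have hrm : Complex.exp θ ^ m = 1 := by
      rw [← Complex.exp_nat_mul]
      have : (m : ℂ) * θ = (-((j.val : ℤ) - (k.val : ℤ)) : ℤ) * (2 * (Real.pi : ℂ) * Complex.I) := by
        rw [hθ]; push_cast; field_simp
      rw [this, Complex.exp_int_mul_two_pi_mul_I]
    rw [Fin.sum_univ_eq_sum_range (fun l => Complex.exp θ ^ l) m, geom_sum_eq hr1, hrm]
    simp [hjk]


lemma selD_transpose_mul (n m μ : ℕ) (hmμ : m = 2 * μ) (hmn : m < n) :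
    (selD n m μ)ᵀ * selD n m μ = selL n μ := by
  ext k k'
  simp only [Matrix.mul_apply, Matrix.transpose_apply, selD, selL, Matrix.of_apply,
    Matrix.diagonal_apply]
  have key : ∀ j : Fin m, ∀ a : Fin n,
      ((j.val < μ ∧ a.val = j.val) ∨ (μ ≤ j.val ∧ a.val = j.val + n - m)) →
      a.val = (if j.val < μ then j.val else j.val + n - m) := by
    intro j a h
    split_ifs with hj
    · rcases h with ⟨h1, h2⟩ | ⟨h1, h2⟩
      · exact h2
      · omega
    · rcases h with ⟨h1, h2⟩ | ⟨h1, h2⟩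
      · omega
      · exact h2
  by_cases hkk : k = k'
  · subst hkk
    simp only [mul_ite, mul_one, mul_zero, ite_self]
    -- each term squares to itself
    have hsq : ∀ j : Fin m,
        (if (j.val < μ ∧ k.val = j.val) ∨ (μ ≤ j.val ∧ k.val = j.val + n - m) then
          (if (j.val < μ ∧ k.val = j.val) ∨ (μ ≤ j.val ∧ k.val = j.val + n - m) then (1:ℂ) else 0)
        else 0)
        = (if (j.val < μ ∧ k.val = j.val) ∨ (μ ≤ j.val ∧ k.val = j.val + n - m) then (1:ℂ) else 0) := by
      intro j; split <;> simp_all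
    rw [Finset.sum_congr rfl (fun j _ => hsq j)]
    by_cases hc : k.val < μ ∨ n - μ ≤ k.val
    · rw [if_pos trivial, if_pos hc]
      rcases hc with hc | hc
      · have hkm : k.val < m := by omega
        rw [Finset.sum_eq_single (⟨k.val, hkm⟩ : Fin m)]
        · simp [hc]
        · intro j _ hj
          rw [if_neg]
          intro h
          apply hj
          rcases h with ⟨h1, h2⟩ | ⟨h1, h2⟩ <;> (apply Fin.ext; simp) <;> omega
        · simp
      · -- k.val ≥ n - μ, witness j = k.val - (n - m)
        have hkn := k.isLt
        have hjlt : k.val - (n - m) < m := by omega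
        rw [Finset.sum_eq_single (⟨k.val - (n - m), hjlt⟩ : Fin m)]
        · rw [if_pos]
          right
          constructor
          · simp; omega
          · simp; omega
        · intro j _ hj
          rw [if_neg]
          intro h
          apply hj
          rcases h with ⟨h1, h2⟩ | ⟨h1, h2⟩ <;> (apply Fin.ext; simp) <;> omega
        · simp
    · rw [if_pos trivial, if_neg hc]
      apply Finset.sum_eq_zero
      intro j _
      rw [if_neg]
      intro h
      rcases h with ⟨h1, h2⟩ | ⟨h1, h2⟩ <;> omega
  · rw [if_neg hkk]
    apply Finset.sum_eq_zero
    intro j _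
    have : ¬((j.val < μ ∧ k.val = j.val) ∨ (μ ≤ j.val ∧ k.val = j.val + n - m)) ∨
           ¬((j.val < μ ∧ k'.val = j.val) ∨ (μ ≤ j.val ∧ k'.val = j.val + n - m)) := by
      by_contra hcon
      push_neg at hcon
      obtain ⟨h1, h2⟩ := hcon
      exact hkk (Fin.ext ((key j k h1).trans (key j k' h2).symm))
    rcases this with h | h
    · rw [if_neg h, zero_mul]
    · rw [if_neg h, mul_zero]


lemma fpool_matrix (n m μ : ℕ) (hn : 0 < n) (hm : 0 < m) (hmμ : m = 2 * μ) (hmn : m < n) :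
    fpoolInv n m μ * fpool n m μ = (1 / (n : ℂ)) • ((dftMatrix n)ᴴ * selL n μ * dftMatrix n) := by
  have hm0 : (m : ℂ) ≠ 0 := Nat.cast_ne_zero.mpr hm.ne'
  have hn0 : (n : ℂ) ≠ 0 := Nat.cast_ne_zero.mpr hn.ne'
  unfold fpoolInv fpool
  rw [Matrix.smul_mul, Matrix.mul_smul, smul_smul]
  rw [show (dftMatrix n)ᴴ * (selD n m μ)ᵀ * dftMatrix m *
        ((dftMatrix m)ᴴ * selD n m μ * dftMatrix n)
      = (dftMatrix n)ᴴ * ((selD n m μ)ᵀ * ((dftMatrix m * (dftMatrix m)ᴴ) *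
        (selD n m μ * dftMatrix n))) by simp only [Matrix.mul_assoc]]
  rw [dft_mul_conjT m hm]
  rw [Matrix.smul_mul, Matrix.mul_smul, Matrix.mul_smul, smul_smul]
  rw [show (selD n m μ)ᵀ * ((1 : Matrix (Fin m) (Fin m) ℂ) * (selD n m μ * dftMatrix n))
      = ((selD n m μ)ᵀ * selD n m μ) * dftMatrix n by
        rw [Matrix.one_mul, Matrix.mul_assoc]]
  rw [selD_transpose_mul n m μ hmμ hmn]
  rw [show (1 / (m : ℂ) * (1 / (n : ℂ))) * (m : ℂ) = 1 / (n : ℂ) by rw [mul_comm (1 / (m:ℂ))]; field_simp]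
  rw [Matrix.mul_assoc]

/-- Lemma 1: P̄ · P · x = x_l for every x ∈ ℂ^n. -/
theorem stmt_2 (n m μ : ℕ) (hn : 0 < n) (hm : 0 < m) (hmμ : m = 2 * μ) (hmn : m < n)
    (x : Fin n → ℂ) :
    fpoolInv n m μ *ᵥ (fpool n m μ *ᵥ x) = lowFreq n μ x := by
  rw [Matrix.mulVec_mulVec, fpool_matrix n m μ hn hm hmμ hmn]
  unfold lowFreq
  rw [Matrix.mulVec_mulVec, Matrix.mulVec_mulVec, Matrix.smul_mulVec]
end

section
/- The F-pooling matrix P is a left inverse of the inverse F-pooling matrix P̄: P · P̄ = I_m, the m×m identity matrix. -/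
open Matrix Complex Finset

lemma sum_exp_eq_zero (n : ℕ) (hn : 0 < n) (d : ℤ) (hd : ¬ ((n:ℤ) ∣ d)) :
    ∑ k : Fin n, Complex.exp (2 * (Real.pi:ℂ) * Complex.I * (d:ℂ) * (k.val:ℂ) / (n:ℂ)) = 0 := by
  set ζ : ℂ := Complex.exp (2 * (Real.pi:ℂ) * Complex.I * (d:ℂ) / (n:ℂ)) with hζ
  have hterm : ∀ k : Fin n,
      Complex.exp (2 * (Real.pi:ℂ) * Complex.I * (d:ℂ) * (k.val:ℂ) / (n:ℂ)) = ζ ^ (k.val) := by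
    intro k
    rw [hζ, ← Complex.exp_nat_mul]
    ring_nf
  have hne : (n:ℂ) ≠ 0 := Nat.cast_ne_zero.mpr hn.ne'
  have hζn : ζ ^ n = 1 := by
    rw [hζ, ← Complex.exp_nat_mul]
    have : (n:ℂ) * (2 * (Real.pi:ℂ) * Complex.I * (d:ℂ) / (n:ℂ)) = (d:ℂ) * (2 * (Real.pi:ℂ) * Complex.I) := by
      field_simp
    rw [this, Complex.exp_int_mul_two_pi_mul_I]
  have hζ1 : ζ ≠ 1 := by
    intro h
    rw [hζ, Complex.exp_eq_one_iff] at h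
    obtain ⟨k, hk⟩ := h
    apply hd
    refine ⟨k, ?_⟩
    have hπ : (Real.pi:ℂ) ≠ 0 := by exact_mod_cast Real.pi_ne_zero
    have h2 : (2 * (Real.pi:ℂ) * Complex.I) ≠ 0 := by
      simp [hπ, Complex.I_ne_zero]
    have hk' : (d:ℂ) * (2 * (Real.pi:ℂ) * Complex.I) = ((n:ℂ) * (k:ℂ)) * (2 * (Real.pi:ℂ) * Complex.I) := by
      field_simp at hk
      linear_combination (2 * (Real.pi:ℂ) * Complex.I) * hk
    have : (d:ℂ) = (n:ℂ) * (k:ℂ) := mul_right_cancel₀ h2 hk'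
    exact_mod_cast this
  calc ∑ k : Fin n, Complex.exp (2 * (Real.pi:ℂ) * Complex.I * (d:ℂ) * (k.val:ℂ) / (n:ℂ))
      = ∑ k ∈ Finset.range n, ζ ^ k := by
        rw [← Fin.sum_univ_eq_sum_range]
        exact Finset.sum_congr rfl fun k _ => hterm k
    _ = (ζ ^ n - 1) / (ζ - 1) := geom_sum_eq hζ1 n
    _ = 0 := by rw [hζn]; simp

lemma dft_mul_conjTranspose (n : ℕ) (hn : 0 < n) :
    dftMatrix n * (dftMatrix n)ᴴ = (n : ℂ) • 1 := by
  ext j l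
  simp only [Matrix.mul_apply, Matrix.conjTranspose_apply, dftMatrix, Matrix.of_apply,
    Complex.star_def, ← Complex.exp_conj, map_div₀, _root_.map_mul, map_neg, Complex.conj_I, Complex.conj_ofReal,
    map_ofNat, Complex.conj_natCast, ← Complex.exp_add]
  have hterm : ∀ k : Fin n,
      Complex.exp (-2 * (Real.pi:ℂ) * Complex.I * ((j.val:ℂ) * (k.val:ℂ)) / (n:ℂ) +
        -2 * (Real.pi:ℂ) * -Complex.I * ((l.val:ℂ) * (k.val:ℂ)) / (n:ℂ)) =
      Complex.exp (2 * (Real.pi:ℂ) * Complex.I * (((l.val:ℤ) - (j.val:ℤ) : ℤ):ℂ) * (k.val:ℂ) / (n:ℂ)) := by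
    intro k
    congr 1
    push_cast
    ring
  rw [Finset.sum_congr rfl fun k _ => hterm k]
  by_cases h : j = l
  · subst h
    simp [Matrix.one_apply]
  · have hd : ¬ ((n:ℤ) ∣ ((l.val:ℤ) - (j.val:ℤ))) := by
      intro hdvd
      have h1 := j.isLt
      have h2 := l.isLt
      have h0 : ((l.val:ℤ) - (j.val:ℤ)) = 0 :=
        Int.eq_zero_of_abs_lt_dvd hdvd (by rw [abs_lt]; omega)
      exact h (Fin.ext (by omega))
    rw [sum_exp_eq_zero n hn _ hd]
    simp [Matrix.one_apply, h]

lemma conjTranspose_mul_dft (n : ℕ) (hn : 0 < n) :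
    (dftMatrix n)ᴴ * dftMatrix n = (n : ℂ) • 1 := by
  ext j l
  simp only [Matrix.mul_apply, Matrix.conjTranspose_apply, dftMatrix, Matrix.of_apply,
    Complex.star_def, ← Complex.exp_conj, map_div₀, _root_.map_mul, map_neg, Complex.conj_I, Complex.conj_ofReal,
    map_ofNat, Complex.conj_natCast, ← Complex.exp_add]
  have hterm : ∀ k : Fin n,
      Complex.exp (-2 * (Real.pi:ℂ) * -Complex.I * ((k.val:ℂ) * (j.val:ℂ)) / (n:ℂ) +
        -2 * (Real.pi:ℂ) * Complex.I * ((k.val:ℂ) * (l.val:ℂ)) / (n:ℂ)) =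
      Complex.exp (2 * (Real.pi:ℂ) * Complex.I * (((j.val:ℤ) - (l.val:ℤ) : ℤ):ℂ) * (k.val:ℂ) / (n:ℂ)) := by
    intro k
    congr 1
    push_cast
    ring
  rw [Finset.sum_congr rfl fun k _ => hterm k]
  by_cases h : j = l
  · subst h
    simp [Matrix.one_apply]
  · have hd : ¬ ((n:ℤ) ∣ ((j.val:ℤ) - (l.val:ℤ))) := by
      intro hdvd
      have h1 := j.isLt
      have h2 := l.isLt
      have h0 : ((j.val:ℤ) - (l.val:ℤ)) = 0 :=
        Int.eq_zero_of_abs_lt_dvd hdvd (by rw [abs_lt]; omega)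
      exact h (Fin.ext (by omega))
    rw [sum_exp_eq_zero n hn _ hd]
    simp [Matrix.one_apply, h]

lemma selD_mul_transpose (n m μ : ℕ) (hmμ : m = 2 * μ) (hmn : m < n) :
    selD n m μ * (selD n m μ)ᵀ = 1 := by
  ext j j'
  simp only [Matrix.mul_apply, Matrix.transpose_apply, selD, Matrix.of_apply, ite_mul, one_mul,
    zero_mul, Matrix.one_apply]
  by_cases h : j = j'
  · subst h
    have hj := j.isLt
    by_cases hjμ : j.val < μ
    · rw [Finset.sum_eq_single ⟨j.val, by omega⟩]
      · simp [hjμ]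
      · intro k _ hk
        have : k.val ≠ j.val := fun he => hk (Fin.ext he)
        split
        · omega
        · rfl
      · simp
    · rw [Finset.sum_eq_single ⟨j.val + n - m, by omega⟩]
      · have hh : ((⟨j.val + n - m, by omega⟩ : Fin n) : ℕ) = j.val + n - m := rfl
        rw [hh, if_pos rfl]
        simp [le_of_not_gt hjμ]
      · intro k _ hk
        have : k.val ≠ j.val + n - m := fun he => hk (Fin.ext he)
        split
        · omega
        · rfl
      · simp
  · rw [if_neg h, Finset.sum_eq_zero]
    intro k _
    have hj := j.isLt
    have hj' := j'.isLt
    have hne : j.val ≠ j'.val := fun he => h (Fin.ext he)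
    split
    · split
      · omega
      · rfl
    · rfl


/-- P · P̄ = I_m. -/
theorem stmt_3 (n m μ : ℕ) (hn : 0 < n) (hm : 0 < m) (hmμ : m = 2 * μ) (hmn : m < n) :
    fpool n m μ * fpoolInv n m μ = (1 : Matrix (Fin m) (Fin m) ℂ) := by
  unfold fpool fpoolInv
  have hnc : (n:ℂ) ≠ 0 := Nat.cast_ne_zero.mpr hn.ne'
  have hmc : (m:ℂ) ≠ 0 := Nat.cast_ne_zero.mpr hm.ne'
  rw [Matrix.smul_mul, Matrix.mul_smul, smul_smul]
  have : (dftMatrix m)ᴴ * selD n m μ * dftMatrix n * ((dftMatrix n)ᴴ * (selD n m μ)ᵀ * dftMatrix m)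
      = (n:ℂ) • ((m:ℂ) • (1 : Matrix (Fin m) (Fin m) ℂ)) := by
    calc (dftMatrix m)ᴴ * selD n m μ * dftMatrix n * ((dftMatrix n)ᴴ * (selD n m μ)ᵀ * dftMatrix m)
        = (dftMatrix m)ᴴ * selD n m μ * (dftMatrix n * (dftMatrix n)ᴴ) * ((selD n m μ)ᵀ * dftMatrix m) := by
          simp only [Matrix.mul_assoc]
      _ = (n:ℂ) • ((dftMatrix m)ᴴ * (selD n m μ * (selD n m μ)ᵀ) * dftMatrix m) := by
          rw [dft_mul_conjTranspose n hn]
          simp only [Matrix.mul_smul, Matrix.smul_mul, Matrix.mul_one]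
          simp only [Matrix.mul_assoc]
      _ = (n:ℂ) • ((dftMatrix m)ᴴ * dftMatrix m) := by
          rw [selD_mul_transpose n m μ hmμ hmn, Matrix.mul_one]
      _ = (n:ℂ) • ((m:ℂ) • 1) := by rw [conjTranspose_mul_dft m hm]
  rw [this, smul_smul, smul_smul]
  rw [show (1/(n:ℂ) * (1/(m:ℂ)) * (n:ℂ) * (m:ℂ)) = 1 by field_simp, one_smul]
end

section
/- (Theorem 3, transitivity of shift-equivalence) Let f : ℂ^n → ℂ^n be any (possibly nonlinear) function that commutes with all circular shifts, i.e., f(S_t x) = S_t(f x) for all t ∈ ℤ and x ∈ ℂ^n. Then the composite of f followed by F-pooling is shift-equivalent: for every x ∈ ℂ^n and every t ∈ ℤ, S_t (P̄ · P · f(x)) = P̄ · P · f(S_t x). -/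
open Matrix Complex Finset

/-! ### Auxiliary machinery -/

noncomputable def Ec (N : ℕ) (c : ℤ) : ℂ :=
  Complex.exp (2 * (Real.pi : ℂ) * Complex.I * (c : ℂ) / (N : ℂ))

lemma Ec_add (N : ℕ) (c d : ℤ) : Ec N (c + d) = Ec N c * Ec N d := by
  rw [Ec, Ec, Ec, ← Complex.exp_add]
  congr 1
  rw [← add_div]
  congr 1
  push_cast
  ring

lemma Ec_star (N : ℕ) (c : ℤ) : star (Ec N c) = Ec N (-c) := by
  rw [Ec, Ec]
  rw [show (star (Complex.exp (2 * (Real.pi : ℂ) * Complex.I * (c : ℂ) / (N : ℂ))) : ℂ)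
    = (starRingEnd ℂ) (Complex.exp (2 * (Real.pi : ℂ) * Complex.I * (c : ℂ) / (N : ℂ))) from rfl]
  rw [← Complex.exp_conj]
  congr 1
  simp only [map_div₀, _root_.map_mul, map_intCast, map_natCast, Complex.conj_I,
    Complex.conj_ofReal, map_ofNat]
  push_cast
  ring

lemma Ec_nat_mul (N : ℕ) (k : ℕ) (c : ℤ) : Ec N ((k : ℤ) * c) = (Ec N c) ^ k := by
  rw [Ec, Ec, ← Complex.exp_nat_mul]
  congr 1
  push_cast
  ring

lemma Ec_dvd (N : ℕ) (c : ℤ) (h : (N : ℤ) ∣ c) : Ec N c = 1 := by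
  rcases Nat.eq_zero_or_pos N with hN | hN
  · subst hN; simp [Ec]
  obtain ⟨d, rfl⟩ := h
  rw [Ec]
  have hne : (N : ℂ) ≠ 0 := by exact_mod_cast hN.ne'
  rw [show (2 * (Real.pi : ℂ) * Complex.I * (((N : ℤ) * d : ℤ) : ℂ) / (N : ℂ))
      = (d : ℂ) * (2 * (Real.pi : ℂ) * Complex.I) by push_cast; field_simp]
  exact Complex.exp_int_mul_two_pi_mul_I d

lemma Ec_periodic (N : ℕ) (c d : ℤ) : Ec N (c + (N : ℤ) * d) = Ec N c := by
  rw [Ec_add, Ec_dvd N _ ⟨d, rfl⟩, mul_one]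

lemma Ec_eq_one_iff (N : ℕ) (hN : 0 < N) (c : ℤ) : Ec N c = 1 ↔ (N : ℤ) ∣ c := by
  constructor
  · intro h
    rw [Ec, Complex.exp_eq_one_iff] at h
    obtain ⟨k, hk⟩ := h
    have hne : (N : ℂ) ≠ 0 := by exact_mod_cast hN.ne'
    have hpi : (Real.pi : ℂ) ≠ 0 := by exact_mod_cast Real.pi_ne_zero
    have h0 : (2 * (Real.pi : ℂ) * Complex.I) ≠ 0 :=
      mul_ne_zero (mul_ne_zero two_ne_zero hpi) Complex.I_ne_zero
    have hc : (c : ℂ) = ((N : ℤ) * k : ℤ) := by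
      field_simp at hk
      have h2 : (2 * (Real.pi : ℂ) * Complex.I) * (c : ℂ)
          = (2 * (Real.pi : ℂ) * Complex.I) * ((N : ℂ) * (k : ℂ)) := by
        linear_combination (2 * (Real.pi : ℂ) * Complex.I) * hk
      have h3 := mul_left_cancel₀ h0 h2
      push_cast
      linear_combination h3
    exact ⟨k, by exact_mod_cast hc⟩
  · exact Ec_dvd N c

lemma Ec_sum (N : ℕ) (hN : 0 < N) (c : ℤ) :
    ∑ j : Fin N, Ec N ((j : ℤ) * c) = if (N : ℤ) ∣ c then (N : ℂ) else 0 := by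
  split_ifs with h
  · have h1 : ∀ j : Fin N, Ec N ((j : ℤ) * c) = 1 := fun j => Ec_dvd N _ (h.mul_left _)
    simp [h1, Finset.card_univ]
  · have hz : Ec N c ≠ 1 := fun hz => h ((Ec_eq_one_iff N hN c).mp hz)
    have h1 : ∀ j : Fin N, Ec N ((j : ℤ) * c) = (Ec N c) ^ (j : ℕ) := fun j => Ec_nat_mul N _ c
    rw [Finset.sum_congr rfl (fun j _ => h1 j), Fin.sum_univ_eq_sum_range, geom_sum_eq hz]
    have h2 : (Ec N c) ^ N = 1 := by
      rw [← Ec_nat_mul]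
      exact Ec_dvd N _ ⟨c, rfl⟩
    rw [h2, sub_self, zero_div]

def sigF (n m μ : ℕ) (hmn : m < n) (j : Fin m) : Fin n :=
  ⟨if j.val < μ then j.val else j.val + n - m, by
    have := j.isLt; by_cases h : j.val < μ <;> simp [h] <;> omega⟩

lemma selD_apply (n m μ : ℕ) (hmn : m < n) (j : Fin m) (k : Fin n) :
    selD n m μ j k = if k = sigF n m μ hmn j then 1 else 0 := by
  have hj := j.isLt
  rw [selD, sigF, Matrix.of_apply]
  simp only [Fin.ext_iff]
  by_cases h : j.val < μ <;>
    simp only [h, if_true, if_false, true_and, false_and, false_or, not_lt] <;>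
    refine if_congr ⟨fun h' => ?_, fun h' => ?_⟩ rfl rfl <;> omega

lemma dft_apply (N : ℕ) (j k : Fin N) : dftMatrix N j k = Ec N (-((j : ℤ) * (k : ℤ))) := by
  rw [dftMatrix, Matrix.of_apply, Ec]
  congr 1
  push_cast
  ring

lemma dftH_apply (N : ℕ) (j k : Fin N) : (dftMatrix N)ᴴ j k = Ec N ((k : ℤ) * (j : ℤ)) := by
  rw [Matrix.conjTranspose_apply, dft_apply, Ec_star, neg_neg]

lemma fpoolInv_apply (n m μ : ℕ) (hmn : m < n) (p : Fin n) (j : Fin m) :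
    fpoolInv n m μ p j = (1 / (m : ℂ)) *
      ∑ a : Fin m, Ec n ((sigF n m μ hmn a : ℤ) * (p : ℤ)) * Ec m (-((a : ℤ) * (j : ℤ))) := by
  rw [fpoolInv, Matrix.smul_apply, smul_eq_mul]
  congr 1
  rw [Matrix.mul_apply]
  refine Finset.sum_congr rfl fun a _ => ?_
  have h1 : ((dftMatrix n)ᴴ * (selD n m μ)ᵀ) p a = (dftMatrix n)ᴴ p (sigF n m μ hmn a) := by
    rw [Matrix.mul_apply]
    have h2 : ∀ r : Fin n, (dftMatrix n)ᴴ p r * (selD n m μ)ᵀ r a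
        = if r = sigF n m μ hmn a then (dftMatrix n)ᴴ p r else 0 := by
      intro r
      rw [Matrix.transpose_apply, selD_apply n m μ hmn]
      split_ifs <;> simp
    rw [Finset.sum_congr rfl fun r _ => h2 r, Finset.sum_ite_eq' Finset.univ]
    simp
  rw [h1, dftH_apply, dft_apply]

lemma fpool_apply (n m μ : ℕ) (hmn : m < n) (j : Fin m) (q : Fin n) :
    fpool n m μ j q = (1 / (n : ℂ)) *
      ∑ b : Fin m, Ec m ((b : ℤ) * (j : ℤ)) * Ec n (-((sigF n m μ hmn b : ℤ) * (q : ℤ))) := by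
  rw [fpool, Matrix.smul_apply, smul_eq_mul]
  congr 1
  rw [Matrix.mul_apply]
  have h2 : ∀ r : Fin n, ((dftMatrix m)ᴴ * selD n m μ) j r * dftMatrix n r q
      = ∑ b : Fin m, ((dftMatrix m)ᴴ j b * (if r = sigF n m μ hmn b then 1 else 0))
          * dftMatrix n r q := by
    intro r
    rw [Matrix.mul_apply, Finset.sum_mul]
    exact Finset.sum_congr rfl fun b _ => by rw [selD_apply n m μ hmn]
  rw [Finset.sum_congr rfl fun r _ => h2 r, Finset.sum_comm]
  refine Finset.sum_congr rfl fun b _ => ?_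
  have h3 : ∀ r : Fin n, (dftMatrix m)ᴴ j b * (if r = sigF n m μ hmn b then 1 else 0)
      * dftMatrix n r q
      = if r = sigF n m μ hmn b then (dftMatrix m)ᴴ j b * dftMatrix n r q else 0 := by
    intro r; split_ifs <;> simp
  rw [Finset.sum_congr rfl fun r _ => h3 r, Finset.sum_ite_eq' Finset.univ]
  simp only [Finset.mem_univ, if_true]
  rw [dftH_apply, dft_apply]

lemma PbarP_apply (n m μ : ℕ) (hm : 0 < m) (hmn : m < n) (p q : Fin n) :
    (fpoolInv n m μ * fpool n m μ) p q
      = (1 / (n : ℂ)) * ∑ a : Fin m, Ec n ((sigF n m μ hmn a : ℤ) * ((p : ℤ) - (q : ℤ))) := by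
  have hmC : (m : ℂ) ≠ 0 := by exact_mod_cast hm.ne'
  rw [Matrix.mul_apply]
  rw [Finset.sum_congr rfl fun j _ => by
    rw [fpoolInv_apply n m μ hmn, fpool_apply n m μ hmn]]
  have step1 : ∀ j : Fin m,
      ((1 / (m : ℂ)) * ∑ a : Fin m, Ec n ((sigF n m μ hmn a : ℤ) * (p : ℤ))
          * Ec m (-((a : ℤ) * (j : ℤ))))
        * ((1 / (n : ℂ)) * ∑ b : Fin m, Ec m ((b : ℤ) * (j : ℤ))
          * Ec n (-((sigF n m μ hmn b : ℤ) * (q : ℤ))))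
      = (1 / ((m : ℂ) * (n : ℂ))) * ∑ a : Fin m, ∑ b : Fin m,
          (Ec n ((sigF n m μ hmn a : ℤ) * (p : ℤ))
            * Ec n (-((sigF n m μ hmn b : ℤ) * (q : ℤ))))
          * Ec m ((j : ℤ) * ((b : ℤ) - (a : ℤ))) := by
    intro j
    rw [show ∀ x y : ℂ, ((1 / (m : ℂ)) * x) * ((1 / (n : ℂ)) * y)
        = (1 / ((m : ℂ) * (n : ℂ))) * (x * y) from fun x y => by ring]
    congr 1
    rw [Finset.sum_mul_sum]
    refine Finset.sum_congr rfl fun a _ => Finset.sum_congr rfl fun b _ => ?_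
    have h4 : Ec m (-((a : ℤ) * (j : ℤ))) * Ec m ((b : ℤ) * (j : ℤ))
        = Ec m ((j : ℤ) * ((b : ℤ) - (a : ℤ))) := by
      rw [← Ec_add]; congr 1; ring
    calc Ec n ((sigF n m μ hmn a : ℤ) * (p : ℤ)) * Ec m (-((a : ℤ) * (j : ℤ)))
          * (Ec m ((b : ℤ) * (j : ℤ)) * Ec n (-((sigF n m μ hmn b : ℤ) * (q : ℤ))))
        = (Ec n ((sigF n m μ hmn a : ℤ) * (p : ℤ))
            * Ec n (-((sigF n m μ hmn b : ℤ) * (q : ℤ))))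
          * (Ec m (-((a : ℤ) * (j : ℤ))) * Ec m ((b : ℤ) * (j : ℤ))) := by ring
      _ = _ := by rw [h4]
  rw [Finset.sum_congr rfl fun j _ => step1 j, ← Finset.mul_sum, Finset.sum_comm]
  rw [Finset.sum_congr rfl fun a _ => Finset.sum_comm]
  have step2 : ∀ a : Fin m, ∀ b : Fin m,
      ∑ j : Fin m, (Ec n ((sigF n m μ hmn a : ℤ) * (p : ℤ))
          * Ec n (-((sigF n m μ hmn b : ℤ) * (q : ℤ))))
        * Ec m ((j : ℤ) * ((b : ℤ) - (a : ℤ)))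
      = if b = a then (Ec n ((sigF n m μ hmn a : ℤ) * (p : ℤ))
          * Ec n (-((sigF n m μ hmn a : ℤ) * (q : ℤ)))) * (m : ℂ) else 0 := by
    intro a b
    rw [← Finset.mul_sum, Ec_sum m hm]
    have hdvd : ((m : ℤ) ∣ (b : ℤ) - (a : ℤ)) ↔ b = a := by
      constructor
      · intro h
        by_contra hne
        have h1 : (b : ℤ) - (a : ℤ) ≠ 0 := by
          intro h0
          exact hne (Fin.ext (by omega))
        have h2 : (m : ℤ) ≤ |(b : ℤ) - (a : ℤ)| :=
          Int.le_of_dvd (abs_pos.mpr h1) ((dvd_abs _ _).mpr h)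
        have hb := b.isLt; have ha := a.isLt
        rcases le_or_gt 0 ((b : ℤ) - (a : ℤ)) with h3 | h3
        · rw [abs_of_nonneg h3] at h2; omega
        · rw [abs_of_neg h3] at h2; omega
      · rintro rfl; simp
    by_cases hba : b = a
    · subst hba
      rw [if_pos (hdvd.mpr rfl), if_pos rfl]
    · rw [if_neg (fun h => hba (hdvd.mp h)), if_neg hba, mul_zero]
  rw [Finset.sum_congr rfl fun a _ => Finset.sum_congr rfl fun b _ => step2 a b]
  rw [Finset.sum_congr rfl fun a _ => Finset.sum_ite_eq' Finset.univ a _]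
  simp only [Finset.mem_univ, if_true]
  have step3 : ∀ x : Fin m,
      Ec n ((sigF n m μ hmn x : ℤ) * (p : ℤ)) * Ec n (-((sigF n m μ hmn x : ℤ) * (q : ℤ)))
        * (m : ℂ)
      = (m : ℂ) * Ec n ((sigF n m μ hmn x : ℤ) * ((p : ℤ) - (q : ℤ))) := by
    intro x
    rw [← Ec_add, show (sigF n m μ hmn x : ℤ) * (p : ℤ) + -((sigF n m μ hmn x : ℤ) * (q : ℤ))
      = (sigF n m μ hmn x : ℤ) * ((p : ℤ) - (q : ℤ)) by ring]
    ring
  rw [Finset.sum_congr rfl fun x _ => step3 x, ← Finset.mul_sum]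
  rw [show ∀ S : ℂ, 1 / ((m : ℂ) * (n : ℂ)) * ((m : ℂ) * S) = 1 / (n : ℂ) * S from
    fun S => by rw [show (1 : ℂ) / ((m : ℂ) * (n : ℂ)) * ((m : ℂ) * S)
      = ((m : ℂ) * (m : ℂ)⁻¹) * (1 / (n : ℂ) * S) by ring, mul_inv_cancel₀ hmC, one_mul]]

lemma PbarP_congr (n m μ : ℕ) (hm : 0 < m) (hmn : m < n) (p q p' q' : Fin n)
    (h : ((p : ℤ) - (q : ℤ)) % (n : ℤ) = ((p' : ℤ) - (q' : ℤ)) % (n : ℤ)) :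
    (fpoolInv n m μ * fpool n m μ) p q = (fpoolInv n m μ * fpool n m μ) p' q' := by
  rw [PbarP_apply n m μ hm hmn, PbarP_apply n m μ hm hmn]
  congr 1
  refine Finset.sum_congr rfl fun a _ => ?_
  have hd : (n : ℤ) ∣ ((p' : ℤ) - (q' : ℤ)) - ((p : ℤ) - (q : ℤ)) := Int.ModEq.dvd h
  obtain ⟨d, hd⟩ := hd
  have h5 : (sigF n m μ hmn a : ℤ) * ((p' : ℤ) - (q' : ℤ))
      = (sigF n m μ hmn a : ℤ) * ((p : ℤ) - (q : ℤ))
        + (n : ℤ) * ((sigF n m μ hmn a : ℤ) * d) := by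
    linear_combination (sigF n m μ hmn a : ℤ) * hd
  rw [h5, Ec_periodic]

lemma shift_mulVec {n : ℕ} (A : Matrix (Fin n) (Fin n) ℂ)
    (hA : ∀ p q p' q' : Fin n, ((p : ℤ) - (q : ℤ)) % (n : ℤ) = ((p' : ℤ) - (q' : ℤ)) % (n : ℤ) →
      A p q = A p' q')
    (t : ℤ) (y : Fin n → ℂ) :
    shift t (A *ᵥ y) = A *ᵥ shift t y := by
  funext p
  have hn' : 0 < n := p.pos
  have hnz : ((n : ℤ)) ≠ 0 := by exact_mod_cast hn'.ne'
  have key : ∀ k : Fin n, (0 : ℤ) ≤ ((k : ℤ) - t) % (n : ℤ) ∧ ((k : ℤ) - t) % (n : ℤ) < n :=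
    fun k => ⟨Int.emod_nonneg _ hnz, Int.emod_lt_of_pos _ (by exact_mod_cast hn')⟩
  set e : Fin n → Fin n := fun k => ⟨(((k : ℤ) - t) % (n : ℤ)).toNat, by
    have := key k; omega⟩ with he
  have heval : ∀ k : Fin n, ((e k : ℕ) : ℤ) = ((k : ℤ) - t) % (n : ℤ) := by
    intro k
    have := key k
    simp only [he]
    omega
  have hinj : Function.Injective e := by
    intro a b hab
    have h1 : ((a : ℤ) - t) % (n : ℤ) = ((b : ℤ) - t) % (n : ℤ) := by
      have h0 := congrArg (fun z : Fin n => ((z : ℕ) : ℤ)) hab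
      simpa only [heval] using h0
    have h2 : (n : ℤ) ∣ ((b : ℤ) - t) - ((a : ℤ) - t) := Int.ModEq.dvd h1
    obtain ⟨k, hk⟩ := h2
    have haz : ((a : ℤ)) < n := by exact_mod_cast a.isLt
    have hbz : ((b : ℤ)) < n := by exact_mod_cast b.isLt
    have haz0 : (0 : ℤ) ≤ (a : ℤ) := by exact_mod_cast Nat.zero_le _
    have hbz0 : (0 : ℤ) ≤ (b : ℤ) := by exact_mod_cast Nat.zero_le _
    have hnn : (0 : ℤ) < (n : ℤ) := by exact_mod_cast hn'
    have hk0 : k = 0 := by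
      by_contra hk0
      rcases lt_or_gt_of_ne hk0 with h | h
      · have h3 : (n : ℤ) * k ≤ (n : ℤ) * (-1) :=
          mul_le_mul_of_nonneg_left (by omega) (by omega)
        linarith
      · have h3 : (n : ℤ) * 1 ≤ (n : ℤ) * k :=
          mul_le_mul_of_nonneg_left (by omega) (by omega)
        linarith
    have h4 : (a : ℤ) = (b : ℤ) := by rw [hk0] at hk; omega
    exact Fin.ext (by exact_mod_cast h4)
  have hbij : Function.Bijective e := Finite.injective_iff_bijective.mp hinj
  show (A *ᵥ y) (e p) = (A *ᵥ shift t y) p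
  simp only [Matrix.mulVec, dotProduct]
  refine (Fintype.sum_bijective e hbij (fun q => A p q * (shift t y) q)
    (fun q => A (e p) q * y q) ?_).symm
  intro q
  show A p q * shift t y q = A (e p) (e q) * y (e q)
  have hy : (shift t y) q = y (e q) := rfl
  rw [hy]
  congr 1
  apply hA
  rw [heval, heval]
  calc ((p : ℤ) - (q : ℤ)) % (n : ℤ)
      = (((p : ℤ) - t) - ((q : ℤ) - t)) % (n : ℤ) := by ring_nf
    _ = (((p : ℤ) - t) % (n : ℤ) - ((q : ℤ) - t) % (n : ℤ)) % (n : ℤ) := by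
        rw [← Int.sub_emod]

/-- Theorem 3: if f commutes with all circular shifts then so does the
composite of f followed by F-pooling (and reconstruction). -/
theorem stmt_12 (n m μ : ℕ) (hn : 0 < n) (hm : 0 < m) (hmμ : m = 2 * μ) (hmn : m < n)
    (f : (Fin n → ℂ) → (Fin n → ℂ))
    (hf : ∀ (t : ℤ) (x : Fin n → ℂ), f (shift t x) = shift t (f x))
    (x : Fin n → ℂ) (t : ℤ) :
    shift t (fpoolInv n m μ *ᵥ (fpool n m μ *ᵥ f x)) =
      fpoolInv n m μ *ᵥ (fpool n m μ *ᵥ f (shift t x)) := by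
  rw [hf t x, Matrix.mulVec_mulVec, Matrix.mulVec_mulVec]
  exact shift_mulVec _ (fun p q p' q' h => PbarP_congr n m μ hm hmn p q p' q' h) t (f x)
end

section
/- (F-pooling reconstruction is a projection) The matrix Q = P̄ · P ∈ ℂ^{n×n} is idempotent: Q · Q = Q. Equivalently, applying F-pooling followed by inverse F-pooling twice yields the same result as applying it once. -/
open Matrix Complex Finset

lemma dft_sum (n : ℕ) (hn : 0 < n) (j k : Fin n) :
    ∑ l : Fin n, Complex.exp (2 * (Real.pi : ℂ) * Complex.I * (l.val : ℂ) *
      ((k.val : ℂ) - (j.val : ℂ)) / (n : ℂ)) = if j = k then (n : ℂ) else 0 := by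
  have hn' : (n : ℂ) ≠ 0 := Nat.cast_ne_zero.mpr hn.ne'
  set z : ℂ := 2 * (Real.pi : ℂ) * Complex.I * ((k.val : ℂ) - (j.val : ℂ)) / (n : ℂ) with hz
  have hterm : ∀ l : Fin n, Complex.exp (2 * (Real.pi : ℂ) * Complex.I * (l.val : ℂ) *
      ((k.val : ℂ) - (j.val : ℂ)) / (n : ℂ)) = Complex.exp z ^ (l.val) := by
    intro l
    rw [← Complex.exp_nat_mul]
    congr 1
    rw [hz]; ring
  simp only [hterm]
  rw [Fin.sum_univ_eq_sum_range (fun i => Complex.exp z ^ i) n]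
  by_cases hjk : j = k
  · subst hjk
    simp [hz]
  · have hzn : Complex.exp z ^ n = 1 := by
      rw [← Complex.exp_nat_mul]
      have : (n : ℂ) * z = ((k.val : ℤ) - (j.val : ℤ) : ℤ) * (2 * (Real.pi : ℂ) * Complex.I) := by
        rw [hz]; push_cast; field_simp
      rw [this, Complex.exp_int_mul_two_pi_mul_I]
    have hz1 : Complex.exp z ≠ 1 := by
      intro h
      rw [Complex.exp_eq_one_iff] at h
      obtain ⟨t, ht⟩ := h
      rw [hz] at ht
      have hpi : (Real.pi : ℂ) ≠ 0 := by exact_mod_cast Real.pi_ne_zero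
      have h2pi : (2 * (Real.pi : ℂ) * Complex.I) ≠ 0 := by
        simp [Real.pi_ne_zero, Complex.I_ne_zero]
      have ht' : (2 * (Real.pi : ℂ) * Complex.I) * ((k.val : ℂ) - (j.val : ℂ)) =
          (2 * (Real.pi : ℂ) * Complex.I) * ((t : ℂ) * (n : ℂ)) := by
        field_simp at ht
        linear_combination (2 * (Real.pi : ℂ) * Complex.I) * ht
      have hc : ((k.val : ℂ) - (j.val : ℂ)) = (t : ℂ) * (n : ℂ) :=
        mul_left_cancel₀ h2pi ht'
      have hzz : (k.val : ℤ) - (j.val : ℤ) = t * n := by exact_mod_cast hc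
      have hkz : (k.val : ℤ) < n := by exact_mod_cast k.isLt
      have hjz : (j.val : ℤ) < n := by exact_mod_cast j.isLt
      have hkz0 : (0 : ℤ) ≤ (k.val : ℤ) := Int.ofNat_nonneg _
      have hjz0 : (0 : ℤ) ≤ (j.val : ℤ) := Int.ofNat_nonneg _
      have hn0 : (0 : ℤ) < (n : ℤ) := by exact_mod_cast hn
      have l1 : t * (n : ℤ) < 1 * n := by linarith
      have l2 : (-1 : ℤ) * n < t * n := by linarith
      have t1 : t < 1 := lt_of_mul_lt_mul_right l1 hn0.le
      have t2 : (-1 : ℤ) < t := lt_of_mul_lt_mul_right l2 hn0.le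
      have ht0 : t = 0 := by omega
      subst ht0
      simp at hzz
      have hne : j.val ≠ k.val := fun h => hjk (Fin.ext h)
      omega
    rw [geom_sum_eq hz1, hzn]
    simp [hjk]

lemma fpool_mul_fpoolInv (n m μ : ℕ) (hn : 0 < n) (hm : 0 < m) (hmμ : m = 2 * μ)
    (hmn : m < n) : fpool n m μ * fpoolInv n m μ = 1 := by
  have hn' : (n : ℂ) ≠ 0 := Nat.cast_ne_zero.mpr hn.ne'
  have hm' : (m : ℂ) ≠ 0 := Nat.cast_ne_zero.mpr hm.ne'
  unfold fpool fpoolInv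
  rw [Matrix.smul_mul, Matrix.mul_smul, smul_smul]
  simp only [Matrix.mul_assoc]
  rw [show dftMatrix n * ((dftMatrix n)ᴴ * ((selD n m μ)ᵀ * dftMatrix m)) =
      (dftMatrix n * (dftMatrix n)ᴴ) * ((selD n m μ)ᵀ * dftMatrix m) from
    (Matrix.mul_assoc _ _ _).symm]
  rw [dft_mul_conjTranspose n hn, Matrix.smul_mul, Matrix.one_mul, Matrix.mul_smul, Matrix.mul_smul]
  rw [show selD n m μ * ((selD n m μ)ᵀ * dftMatrix m) =
      (selD n m μ * (selD n m μ)ᵀ) * dftMatrix m from (Matrix.mul_assoc _ _ _).symm]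
  rw [selD_mul_transpose n m μ hmμ hmn, Matrix.one_mul, conjTranspose_mul_dft m hm]
  rw [smul_smul, smul_smul]
  have : (1 / (n : ℂ) * (1 / (m : ℂ)) * (n : ℂ) * (m : ℂ)) = 1 := by field_simp
  rw [this, one_smul]

/-- Q = P̄P is idempotent. -/
theorem stmt_13 (n m μ : ℕ) (hn : 0 < n) (hm : 0 < m) (hmμ : m = 2 * μ) (hmn : m < n) :
    (fpoolInv n m μ * fpool n m μ) * (fpoolInv n m μ * fpool n m μ) =
      fpoolInv n m μ * fpool n m μ := by
  have key := fpool_mul_fpoolInv n m μ hn hm hmμ hmn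
  rw [Matrix.mul_assoc, ← Matrix.mul_assoc (fpool n m μ), key, Matrix.one_mul]
end
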